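/- Let q be a real number with 0 < q < 1, and for each m ∈ ℕ set τ_m := ∑_{k=0}^{m} binom_q(m,k) (that is, τ_m = (1 ⊕_q 1)^m). Then for every complex x with |x| < 1/(1−q), the series cos_q((1 ⊕_q 1)x) := ∑_{n=0}^{∞} (−1)^n τ_{2n} x^{2n}/[2n]_q! converges and cos_q(x)² − sin_q(x)² = cos_q((1 ⊕_q 1)x). -/

import Mathlib

open Filter Topology

/-- The `q`-basic number `[n]_q = (1 - q^n)/(1 - q)`. -/
noncomputable def qNum (q : ℝ) (n : ℕ) : ℝ := (1 - q ^ n) / (1 - q)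

/-- The `q`-factorial `[n]_q! = [1]_q [2]_q ⋯ [n]_q`, with `[0]_q! = 1`. -/
noncomputable def qFact (q : ℝ) (n : ℕ) : ℝ := ∏ j ∈ Finset.range n, qNum q (j + 1)

/-- The Gaussian binomial coefficient `[n]_q! / ([k]_q! [n-k]_q!)`. -/
noncomputable def qBinom (q : ℝ) (n k : ℕ) : ℝ := qFact q n / (qFact q k * qFact q (n - k))

/-- The `q`-exponential `e_q(z) = ∑ z^n / [n]_q!`. -/
noncomputable def qExp (q : ℝ) (z : ℂ) : ℂ := ∑' n : ℕ, z ^ n / (qFact q n : ℂ)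

/-- The `q`-sine `sin_q(z) = ∑ (-1)^n z^(2n+1) / [2n+1]_q!`. -/
noncomputable def qSin (q : ℝ) (z : ℂ) : ℂ :=
  ∑' n : ℕ, (-1 : ℂ) ^ n * z ^ (2 * n + 1) / (qFact q (2 * n + 1) : ℂ)

/-- The `q`-cosine `cos_q(z) = ∑ (-1)^n z^(2n) / [2n]_q!`. -/
noncomputable def qCos (q : ℝ) (z : ℂ) : ℂ :=
  ∑' n : ℕ, (-1 : ℂ) ^ n * z ^ (2 * n) / (qFact q (2 * n) : ℂ)

/-- The `q`-addition power `(x ⊕_q y)^n = ∑_{k=0}^n binom_q(n,k) x^k y^(n-k)`. -/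
noncomputable def qAddPow (q : ℝ) (x y : ℂ) (n : ℕ) : ℂ :=
  ∑ k ∈ Finset.range (n + 1), (qBinom q n k : ℂ) * x ^ k * y ^ (n - k)

/-- The `q`-subtraction power `(x ⊖_q y)^n = ∑_{k=0}^n binom_q(n,k) (-1)^(n-k) x^k y^(n-k)`. -/
noncomputable def qSubPow (q : ℝ) (x y : ℂ) (n : ℕ) : ℂ :=
  ∑ k ∈ Finset.range (n + 1), (qBinom q n k : ℂ) * (-1 : ℂ) ^ (n - k) * x ^ k * y ^ (n - k)

/-- The `q`-tangent `tan_q(z) = sin_q(z)/cos_q(z)`. -/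
noncomputable def qTan (q : ℝ) (z : ℂ) : ℂ := qSin q z / qCos q z

/-- The second `q`-exponential `E_q(z) = ∑ q^(n(n-1)/2) z^n / [n]_q!`. -/
noncomputable def qExpE (q : ℝ) (z : ℂ) : ℂ :=
  ∑' n : ℕ, (q : ℂ) ^ (n * (n - 1) / 2) * z ^ n / (qFact q n : ℂ)

/-! The Cauchy product of `e_q(z) = ∑ zⁿ/[n]_q!` with itself is `∑ (1 ⊕_q 1)ⁿ zⁿ/[n]_q!`, and
splitting `e_q(±ix)` into even and odd terms gives `cos_q x ± i sin_q x`. Hence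
`cos_q(x)² - sin_q(x)² = (e_q(ix)² + e_q(-ix)²)/2` is the even part of the series of `e_q(ix)²`. -/

lemma qNum_ne_zero {q : ℝ} (hq : |q| < 1) {n : ℕ} (hn : n ≠ 0) : qNum q n ≠ 0 := by
  have hqn : |q ^ n| < 1 := by rw [abs_pow]; exact pow_lt_one₀ (abs_nonneg q) hq hn
  have h1q : 1 - q ≠ 0 := by linarith [le_abs_self q]
  exact div_ne_zero (by linarith [le_abs_self (q ^ n)]) h1q

lemma qFact_ne_zero {q : ℝ} (hq : |q| < 1) (n : ℕ) : qFact q n ≠ 0 :=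
  Finset.prod_ne_zero_iff.mpr fun j _ => qNum_ne_zero hq j.succ_ne_zero

lemma qFact_succ (q : ℝ) (n : ℕ) : qFact q (n + 1) = qFact q n * qNum q (n + 1) :=
  Finset.prod_range_succ _ _

lemma tendsto_qNum {q : ℝ} (hq : |q| < 1) : Tendsto (qNum q) atTop (𝓝 (1 / (1 - q))) := by
  have h := ((tendsto_pow_atTop_nhds_zero_of_abs_lt_one hq).const_sub 1).div_const (1 - q)
  rwa [sub_zero] at h

lemma qBinom_div_qFact {q : ℝ} (hq : |q| < 1) (n k : ℕ) :
    qBinom q n k / qFact q n = (qFact q k * qFact q (n - k))⁻¹ := by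
  rw [qBinom, div_div_cancel_left' (qFact_ne_zero hq n)]

lemma summable_norm_qExp {q : ℝ} (hq : |q| < 1) {y : ℂ} (hy : ‖y‖ < 1 / (1 - q)) :
    Summable fun n => ‖y ^ n / (qFact q n : ℂ)‖ := by
  rcases eq_or_ne y 0 with rfl | hy0
  · refine summable_of_ne_finset_zero (s := {0}) fun n hn => ?_
    simp [zero_pow (Finset.notMem_singleton.mp hn)]
  have h1q : 0 < 1 - q := by linarith [le_abs_self q]
  have hratio : (fun n => ‖y ^ (n + 1) / (qFact q (n + 1) : ℂ)‖ / ‖y ^ n / (qFact q n : ℂ)‖) =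
      fun n => ‖y‖ / |qNum q (n + 1)| := funext fun n => by
    have := qFact_ne_zero hq n
    simp only [norm_div, norm_pow, qFact_succ, Complex.ofReal_mul, norm_mul, Complex.norm_real,
      Real.norm_eq_abs, pow_succ]
    field_simp
  have hlim : Tendsto (fun n => ‖y‖ / |qNum q (n + 1)|) atTop (𝓝 (‖y‖ * (1 - q))) := by
    have hden := ((tendsto_qNum hq).comp (tendsto_add_atTop_nat 1)).abs
    have h := (tendsto_const_nhds (x := ‖y‖)).div hden (by positivity : |1 / (1 - q)| ≠ 0)
    rwa [abs_of_pos (one_div_pos.mpr h1q), div_div_eq_mul_div, div_one] at h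
  refine summable_of_ratio_test_tendsto_lt_one ?_ (.of_forall fun n => ?_)
    (by simpa only [norm_norm, hratio] using hlim)
  · rwa [lt_div_iff₀ h1q] at hy
  · simp [hy0, qFact_ne_zero hq n]

lemma sum_range_qExp_mul_qExp {q : ℝ} (hq : |q| < 1) (y : ℂ) (n : ℕ) :
    ∑ k ∈ Finset.range (n + 1), y ^ k / (qFact q k : ℂ) * (y ^ (n - k) / (qFact q (n - k) : ℂ)) =
      qAddPow q 1 1 n / (qFact q n : ℂ) * y ^ n := by
  simp only [qAddPow, one_pow, mul_one, Finset.sum_div, Finset.sum_mul]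
  refine Finset.sum_congr rfl fun k hk => ?_
  have hkn : k ≤ n := Nat.lt_succ_iff.mp (Finset.mem_range.mp hk)
  rw [← Complex.ofReal_div, qBinom_div_qFact hq, ← pow_mul_pow_sub y hkn]
  push_cast
  ring

lemma hasSum_qExp_sq {q : ℝ} (hq : |q| < 1) {y : ℂ} (hy : ‖y‖ < 1 / (1 - q)) :
    HasSum (fun n => qAddPow q 1 1 n / (qFact q n : ℂ) * y ^ n) (qExp q y ^ 2) := by
  have h := hasSum_sum_range_mul_of_summable_norm (summable_norm_qExp hq hy)
    (summable_norm_qExp hq hy)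
  simp only [← sq, sum_range_qExp_mul_qExp hq] at h
  exact h

lemma qExp_mul_of_sq_eq_neg_one {q : ℝ} {s x : ℂ} (hs : s ^ 2 = -1)
    (h : Summable fun n => (s * x) ^ n / (qFact q n : ℂ)) :
    qExp q (s * x) = qCos q x + s * qSin q x := by
  have hs0 : s ≠ 0 := by rintro rfl; norm_num at hs
  have heven : (fun n => (s * x) ^ (2 * n) / (qFact q (2 * n) : ℂ)) =
      fun n => (-1 : ℂ) ^ n * x ^ (2 * n) / (qFact q (2 * n) : ℂ) := by
    simp only [mul_pow, pow_mul, hs]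
  have hodd : (fun n => (s * x) ^ (2 * n + 1) / (qFact q (2 * n + 1) : ℂ)) =
      fun n => s * ((-1 : ℂ) ^ n * x ^ (2 * n + 1) / (qFact q (2 * n + 1) : ℂ)) := by
    funext n
    rw [mul_pow, pow_succ s, pow_mul, hs]
    ring
  have hcos : HasSum (fun n => (s * x) ^ (2 * n) / (qFact q (2 * n) : ℂ)) (qCos q x) := by
    have h' := h.comp_injective (mul_right_injective₀ (two_ne_zero' ℕ))
    rw [Function.comp_def, heven] at h'
    rw [heven]
    exact h'.hasSum
  have hsin : HasSum (fun n => (s * x) ^ (2 * n + 1) / (qFact q (2 * n + 1) : ℂ))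
      (s * qSin q x) := by
    have h' := h.comp_injective (i := fun n => 2 * n + 1) fun a b hab => by simpa using hab
    rw [Function.comp_def, hodd, summable_mul_left_iff hs0] at h'
    rw [hodd]
    exact h'.hasSum.mul_left s
  exact h.hasSum.unique (hcos.even_add_odd hsin)

lemma hasSum_even_mul_pow {c : ℕ → ℂ} {y A B : ℂ} (hA : HasSum (fun n => c n * y ^ n) A)
    (hB : HasSum (fun n => c n * (-y) ^ n) B) :
    HasSum (fun m => c (2 * m) * y ^ (2 * m)) ((A + B) / 2) := by
  have hodd : ∀ n ∉ Set.range (2 * ·), (c n * y ^ n + c n * (-y) ^ n) / 2 = 0 := by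
    intro n hn
    have hn' : Odd n := Nat.not_even_iff_odd.mp fun ⟨k, hk⟩ => hn ⟨k, by simp only; omega⟩
    rw [hn'.neg_pow]
    ring
  have h := ((mul_right_injective₀ (two_ne_zero' ℕ)).hasSum_iff hodd).mpr
    ((hA.add hB).div_const 2)
  convert h using 2 with m
  simp only [Function.comp_apply, (even_two_mul m).neg_pow]
  ring

lemma hasSum_qCos_add_mul_qSin_sq {q : ℝ} (hq : |q| < 1) {s x : ℂ} (hs : s ^ 2 = -1)
    (hx : ‖x‖ < 1 / (1 - q)) :
    HasSum (fun n => qAddPow q 1 1 n / (qFact q n : ℂ) * (s * x) ^ n)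
      ((qCos q x + s * qSin q x) ^ 2) := by
  have hs1 : ‖s‖ = 1 := by
    have h := congrArg norm hs
    rw [norm_pow, norm_neg, norm_one] at h
    exact (pow_eq_one_iff_of_nonneg (norm_nonneg s) two_ne_zero).mp h
  have hsx : ‖s * x‖ < 1 / (1 - q) := by rwa [norm_mul, hs1, one_mul]
  rw [← qExp_mul_of_sq_eq_neg_one hs (summable_norm_qExp hq hsx).of_norm]
  exact hasSum_qExp_sq hq hsx

/-- `cos_q(x)² - sin_q(x)² = cos_q((1 ⊕_q 1) x)`, where the right-hand series is
`∑ (-1)^n (1 ⊕_q 1)^{2n} x^{2n} / [2n]_q!`. -/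
theorem qCos_sq_sub_qSin_sq (q : ℝ) (hq0 : 0 < q) (hq1 : q < 1) (x : ℂ)
    (hx : ‖x‖ < 1 / (1 - q)) :
    HasSum
      (fun n : ℕ => (-1 : ℂ) ^ n * qAddPow q 1 1 (2 * n) * x ^ (2 * n) / (qFact q (2 * n) : ℂ))
      (qCos q x ^ 2 - qSin q x ^ 2) := by
  have hq : |q| < 1 := abs_lt.mpr ⟨by linarith, hq1⟩
  have hplus := hasSum_qCos_add_mul_qSin_sq hq Complex.I_sq hx
  have hminus := hasSum_qCos_add_mul_qSin_sq hq (by rw [neg_sq, Complex.I_sq]) hx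
  simp only [neg_mul] at hminus
  convert hasSum_even_mul_pow hplus hminus using 1
  · funext n
    rw [mul_pow, pow_mul Complex.I, Complex.I_sq]
    ring
  · linear_combination (-qSin q x ^ 2) * Complex.I_sq
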